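/- Let d ≥ 2 and k ≥ 1. Then there exist constants 0 < c ≤ C, depending only on d and k, such that for all integers l ≥ k, c ≤ |c_{k,l}| / (2^k · (l(l+d−2))^k) ≤ C. Consequently, the multiplier operator T_k on L²(S^{d−1}) defined by T_k(g) := ∑_{l=1}^∞ [c_{k,l}/(2^k (l(l+d−2))^k)] ∑_{j=1}^{ν(l)} ĝ_{lj} Y_l^j is a bounded linear operator on L²(S^{d−1}). -/

import Mathlib

open MeasureTheory Real Filter
open scoped ENNReal NNReal ComplexConjugate

noncomputable section

abbrev Sphere (d : ℕ) : Type := ↥(Metric.sphere (0 : EuclideanSpace ℝ (Fin d)) 1)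

def sphereMeasure (d : ℕ) : Measure (Sphere d) := μH[(d : ℝ) - 1]

def sphereVol (d : ℕ) : ℝ := (sphereMeasure d Set.univ).toReal

/-- Membership in the weight class `W(T, t₀, T₀)`. -/
def memW (T t₀ T₀ : ℝ) (ρ : ℝ → ℝ) : Prop :=
  MemLp ρ 2 (volume.restrict (Set.Ioc (0 : ℝ) T)) ∧
    (∀ᵐ θ ∂(volume.restrict (Set.Ioc (0 : ℝ) T)), 0 ≤ ρ θ) ∧
    0 < ∫ θ in t₀..T₀, ρ θ

/-- The normalizing constant `z_t`. -/
def zt (d : ℕ) (T : ℝ) (ρ : ℝ → ℝ) (t : ℝ) : ℝ :=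
  sphereVol (d - 1) * (t / T) * ∫ θ in (0 : ℝ)..T, (Real.sin (t * θ / T)) ^ (d - 2) * ρ θ

/-- The spherical cap `C(ξ, t)`. -/
def cap (d : ℕ) (ξ : Sphere d) (t : ℝ) : Set (Sphere d) :=
  {η | Real.cos t ≤ inner (𝕜 := ℝ) (ξ : EuclideanSpace ℝ (Fin d)) (η : EuclideanSpace ℝ (Fin d))}

/-- The generalized average `A_t^ρ f (ξ)`. -/
def avg (d : ℕ) (T : ℝ) (ρ : ℝ → ℝ) (f : Sphere d → ℂ) (t : ℝ) (ξ : Sphere d) : ℂ :=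
  (zt d T ρ t : ℂ)⁻¹ *
    ∫ η in cap d ξ t,
      (ρ ((T / t) * Real.arccos (inner (𝕜 := ℝ) (ξ : EuclideanSpace ℝ (Fin d))
        (η : EuclideanSpace ℝ (Fin d)))) : ℂ) * f η ∂(sphereMeasure d)

/-- The Legendre polynomial `P_{l,d}` of degree `l` in dimension `d`. -/
def LegendreP (d l : ℕ) (s : ℝ) : ℝ :=
  (l.factorial : ℝ) * Real.Gamma (((d : ℝ) - 1) / 2) *
    ∑ k ∈ Finset.range (l / 2 + 1),
      (-1) ^ k * (1 - s ^ 2) ^ k * s ^ (l - 2 * k) /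
        (4 ^ k * (k.factorial : ℝ) * ((l - 2 * k).factorial : ℝ) *
          Real.Gamma ((k : ℝ) + ((d : ℝ) - 1) / 2))

/-- `c_{k,l} = (-1)^k P_{l,d}^{(k)}(1) / k!`. -/
def legCoeff (d k l : ℕ) : ℝ :=
  (-1) ^ k * iteratedDeriv k (LegendreP d l) 1 / (k.factorial : ℝ)

/-- The multiplier `m_{l,t}^ρ`. -/
def mlt (d : ℕ) (T : ℝ) (ρ : ℝ → ℝ) (l : ℕ) (t : ℝ) : ℝ :=
  sphereVol (d - 1) / zt d T ρ t * (t / T) *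
    ∫ θ in (0 : ℝ)..T,
      LegendreP d l (Real.cos (t * θ / T)) * (Real.sin (t * θ / T)) ^ (d - 2) * ρ θ

/-- `B_k^ρ(t) = A_t^ρ(|ξ-·|^{2k})(ξ)`. -/
def Bk (d : ℕ) (T : ℝ) (ρ : ℝ → ℝ) (k : ℕ) (t : ℝ) : ℝ :=
  2 ^ k * (sphereVol (d - 1) / zt d T ρ t) * (t / T) *
    ∫ θ in (0 : ℝ)..T,
      (1 - Real.cos (t * θ / T)) ^ k * (Real.sin (t * θ / T)) ^ (d - 2) * ρ θ

/-- `M_{n,l,t}^ρ`. -/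
def Mnlt (d : ℕ) (T : ℝ) (ρ : ℝ → ℝ) (n l : ℕ) (t : ℝ) : ℝ :=
  mlt d T ρ l t - ∑ k ∈ Finset.range (n + 1), legCoeff d k l / 2 ^ k * Bk d T ρ k t

/-- `N_{n,l,t}^ρ`. -/
def Nnlt (d : ℕ) (T : ℝ) (ρ : ℝ → ℝ) (n l : ℕ) (t : ℝ) : ℝ :=
  Mnlt d T ρ (n - 1) l t - legCoeff d n l / 2 ^ n * Bk d T ρ n t * mlt d T ρ l t

/-- `I_{α,n}^{ρ,T}(l)`. -/
def Ifun (d : ℕ) (T : ℝ) (ρ : ℝ → ℝ) (n : ℕ) (α : ℝ) (l : ℕ) : ℝ≥0∞ :=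
  ∫⁻ t in Set.Ioc (0 : ℝ) T, ENNReal.ofReal (|Mnlt d T ρ n l t| ^ 2 / t ^ (2 * α + 1))

/-- `J_n^{ρ,T}(l)`. -/
def Jfun (d : ℕ) (T : ℝ) (ρ : ℝ → ℝ) (n l : ℕ) : ℝ≥0∞ :=
  ∫⁻ t in Set.Ioc (0 : ℝ) T, ENNReal.ofReal (|Nnlt d T ρ n l t| ^ 2 / t ^ (4 * n + 1))

/-- A spherical harmonic of degree `l`: the restriction to the sphere of a harmonic
homogeneous polynomial of degree `l` on `ℝ^d`. -/
def IsSphericalHarmonic (d l : ℕ) (Y : Sphere d → ℂ) : Prop :=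
  ∃ p : MvPolynomial (Fin d) ℂ, p.IsHomogeneous l ∧
    (∑ i : Fin d, MvPolynomial.pderiv i (MvPolynomial.pderiv i p)) = 0 ∧
    ∀ η : Sphere d,
      Y η = MvPolynomial.eval
        (fun i => (((η : EuclideanSpace ℝ (Fin d)) i : ℝ) : ℂ)) p

/-- A complete orthonormal system of spherical harmonics on `S^{d-1}`. -/
structure SHBasis (d : ℕ) where
  ν : ℕ → ℕ
  Y : (l : ℕ) → Fin (ν l) → Sphere d → ℂ
  harmonic : ∀ l j, IsSphericalHarmonic d l (Y l j)
  orthonormal : ∀ l j l' j',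
    (∫ η, Y l j η * conj (Y l' j' η) ∂(sphereMeasure d)) =
      if l = l' ∧ (j : ℕ) = (j' : ℕ) then 1 else 0
  complete : ∀ f : Sphere d → ℂ, MemLp f 2 (sphereMeasure d) →
    (∀ l j, (∫ η, f η * conj (Y l j η) ∂(sphereMeasure d)) = 0) →
    f =ᵐ[sphereMeasure d] 0

/-- The Fourier coefficient `f̂_{lj}` with respect to a spherical harmonic basis. -/
def shCoeff (d : ℕ) (B : SHBasis d) (f : Sphere d → ℂ) (l : ℕ) (j : Fin (B.ν l)) : ℂ :=
  ∫ η, f η * conj (B.Y l j η) ∂(sphereMeasure d)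

/-- Membership in the Sobolev space `H^α(S^{d-1})`. -/
def MemSobolev (d : ℕ) (B : SHBasis d) (α : ℝ) (f : Sphere d → ℂ) : Prop :=
  MemLp f 2 (sphereMeasure d) ∧
    Summable (fun l : ℕ =>
      (1 + Real.sqrt l * Real.sqrt ((l : ℝ) + d - 2)) ^ (2 * α) *
        ∑ j, ‖shCoeff d B f l j‖ ^ 2)

/-- The function `η ↦ |ξ - η|^{2k}` on the sphere, as a complex-valued function. -/
def distPow (d : ℕ) (ξ : Sphere d) (k : ℕ) : Sphere d → ℂ :=
  fun η => ((‖(ξ : EuclideanSpace ℝ (Fin d)) - (η : EuclideanSpace ℝ (Fin d))‖ ^ (2 * k) : ℝ) : ℂ)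

/-- The square of the generalized square function `S_α^{ρ,T}(f, g₁, …, g_n)(ξ)`,
valued in `ℝ≥0∞`.  For `α = 2n` the modified (endpoint) definition is used. -/
def sqFnSq (d : ℕ) (T : ℝ) (ρ : ℝ → ℝ) (n : ℕ) (α : ℝ)
    (f : Sphere d → ℂ) (g : ℕ → Sphere d → ℂ) (ξ : Sphere d) : ℝ≥0∞ :=
  if α = 2 * n then
    ∫⁻ t in Set.Ioc (0 : ℝ) T, ENNReal.ofReal
      (‖avg d T ρ f t ξ - f ξ -
          (∑ k ∈ Finset.Icc 1 (n - 1), g k ξ * avg d T ρ (distPow d ξ k) t ξ) -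
          avg d T ρ (g n) t ξ * avg d T ρ (distPow d ξ n) t ξ‖ ^ 2 / t ^ (2 * α + 1))
  else
    ∫⁻ t in Set.Ioc (0 : ℝ) T, ENNReal.ofReal
      (‖avg d T ρ f t ξ - f ξ -
          ∑ k ∈ Finset.Icc 1 n, g k ξ * avg d T ρ (distPow d ξ k) t ξ‖ ^ 2 / t ^ (2 * α + 1))

/-- Condition (⋆) on the weight `ρ`. -/
def starCond (d n : ℕ) (T T₀ : ℝ) (ρ : ℝ → ℝ) : Prop :=
  ((d : ℝ) - 1) / ((d : ℝ) + 2 * n - 1) *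
      ((∫ θ in (0 : ℝ)..T, θ ^ (d - 2) * ρ θ) ^ 2 *
        ∫ θ in (0 : ℝ)..T, θ ^ (2 * n + d) * ρ θ) /
      ((∫ θ in (0 : ℝ)..T₀, θ ^ (d - 2) * ρ θ) * (∫ θ in (0 : ℝ)..T₀, θ ^ d * ρ θ) *
        ∫ θ in (0 : ℝ)..T₀, θ ^ (2 * n + d - 2) * ρ θ) < 1

/-- `k_{d,n}(l)`. -/
def kdn (d n l : ℕ) : ℝ :=
  if l = n then 1 / 2
  else (2 * (n : ℝ) + d - 1) / (((l : ℝ) + n + d - 2) * ((l : ℝ) - n))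

/-- The angle `a_{d,n,ε}(l)` defined by `cos a = 1 - ε k_{d,n}(l)`. -/
def adn (d n : ℕ) (ε : ℝ) (l : ℕ) : ℝ := Real.arccos (1 - ε * kdn d n l)

/-- The Poisson kernel `p_r(η, ξ)` on `S^{d-1}`. -/
def poissonKernelSphere (d : ℕ) (r : ℝ) (η ξ : Sphere d) : ℝ :=
  (1 - r ^ 2) /
    (sphereVol d *
      ‖r • (ξ : EuclideanSpace ℝ (Fin d)) - (η : EuclideanSpace ℝ (Fin d))‖ ^ d)

/-- The Poisson transform `P_r f` of a complex-valued function. -/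
def poisson (d : ℕ) (r : ℝ) (f : Sphere d → ℂ) (ξ : Sphere d) : ℂ :=
  ∫ η, (poissonKernelSphere d r η ξ : ℂ) * f η ∂(sphereMeasure d)

/-- The Poisson transform `P_r u` of a real-valued function. -/
def poissonR (d : ℕ) (r : ℝ) (u : Sphere d → ℝ) (ξ : Sphere d) : ℝ :=
  ∫ η, poissonKernelSphere d r η ξ * u η ∂(sphereMeasure d)

section AuxPart1
open Polynomial

-- The polynomial version of LegendreP
def Qpoly (d l : ℕ) : Polynomial ℝ :=
  Polynomial.C ((l.factorial : ℝ) * Real.Gamma (((d : ℝ) - 1) / 2)) *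
    ∑ j ∈ Finset.range (l / 2 + 1),
      Polynomial.C ((-1: ℝ) ^ j /
        (4 ^ j * (j.factorial : ℝ) * ((l - 2 * j).factorial : ℝ) *
          Real.Gamma ((j : ℝ) + ((d : ℝ) - 1) / 2))) *
        ((1 - Polynomial.X ^ 2) ^ j * Polynomial.X ^ (l - 2 * j))

lemma LegendreP_eq_eval (d l : ℕ) (s : ℝ) : LegendreP d l s = (Qpoly d l).eval s := by
  simp only [LegendreP, Qpoly, Polynomial.eval_mul, Polynomial.eval_C, Polynomial.eval_finset_sum,
    Polynomial.eval_pow, Polynomial.eval_sub, Polynomial.eval_one, Polynomial.eval_X]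
  congr 1
  refine Finset.sum_congr rfl fun j _ => ?_
  ring

lemma iteratedDeriv_polyEval (k : ℕ) (p : Polynomial ℝ) :
    iteratedDeriv k (fun s => p.eval s) = fun s => (Polynomial.derivative^[k] p).eval s := by
  induction k generalizing p with
  | zero => simp
  | succ n ih =>
    rw [iteratedDeriv_succ']
    have : deriv (fun s => p.eval s) = fun s => p.derivative.eval s := by
      funext x; exact Polynomial.deriv p
    rw [this, ih, Function.iterate_succ_apply]

lemma legCoeff_eq_taylor (d k l : ℕ) :
    legCoeff d k l = (-1) ^ k * ((Polynomial.taylor 1 (Qpoly d l)).coeff k) := by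
  have h1 : LegendreP d l = fun s => (Qpoly d l).eval s := funext (LegendreP_eq_eval d l)
  have h2 : iteratedDeriv k (LegendreP d l) 1 = (Polynomial.derivative^[k] (Qpoly d l)).eval 1 := by
    rw [h1, iteratedDeriv_polyEval]
  have h3 : (Polynomial.derivative^[k] (Qpoly d l)) = k.factorial • Polynomial.hasseDeriv k (Qpoly d l) := by
    rw [← Polynomial.factorial_smul_hasseDeriv]; rfl
  rw [legCoeff, h2, h3, Polynomial.taylor_coeff]
  simp [Polynomial.eval_smul, nsmul_eq_mul]
  field_simp [Nat.factorial_ne_zero]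

def Wpoly (l j : ℕ) : Polynomial ℝ :=
  (Polynomial.X + Polynomial.C 2) ^ j * (Polynomial.X + Polynomial.C 1) ^ (l - 2 * j) *
    Polynomial.X ^ j

lemma taylor_pow' (r : ℝ) (p : Polynomial ℝ) (n : ℕ) :
    Polynomial.taylor r (p ^ n) = (Polynomial.taylor r p) ^ n := by
  induction n with
  | zero => simpa using Polynomial.taylor_one r
  | succ m ih => rw [pow_succ, Polynomial.taylor_mul, ih, pow_succ]

lemma taylor_Qpoly (d l : ℕ) :
    Polynomial.taylor 1 (Qpoly d l) =
      Polynomial.C ((l.factorial : ℝ) * Real.Gamma (((d : ℝ) - 1) / 2)) *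
        ∑ j ∈ Finset.range (l / 2 + 1),
          Polynomial.C ((1 : ℝ) /
            (4 ^ j * (j.factorial : ℝ) * ((l - 2 * j).factorial : ℝ) *
              Real.Gamma ((j : ℝ) + ((d : ℝ) - 1) / 2))) * Wpoly l j := by
  rw [Qpoly, Polynomial.taylor_mul, Polynomial.taylor_C, map_sum]
  congr 1
  refine Finset.sum_congr rfl fun j _ => ?_
  rw [Polynomial.taylor_mul, Polynomial.taylor_C, Polynomial.taylor_mul, taylor_pow',
    taylor_pow', Polynomial.taylor_X]
  have hbase : Polynomial.taylor (1:ℝ) (1 - Polynomial.X ^ 2) =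
      -((Polynomial.X + Polynomial.C 2) * Polynomial.X) := by
    rw [map_sub, taylor_pow', Polynomial.taylor_X, Polynomial.taylor_one]
    simp only [Polynomial.C_1, map_ofNat]
    ring
  rw [hbase, Wpoly]
  rw [show (-((Polynomial.X + Polynomial.C 2) * Polynomial.X)) ^ j =
      Polynomial.C ((-1:ℝ)^j) * ((Polynomial.X + Polynomial.C 2) ^ j * Polynomial.X ^ j) by
    rw [neg_pow, mul_pow]; simp [Polynomial.C_pow]]
  rw [← mul_assoc, ← mul_assoc, ← Polynomial.C_mul]
  rw [show ((-1:ℝ) ^ j / (4 ^ j * (j.factorial : ℝ) * ((l - 2 * j).factorial : ℝ) *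
      Real.Gamma ((j : ℝ) + ((d : ℝ) - 1) / 2)) * (-1:ℝ)^j) =
      (1 : ℝ) / (4 ^ j * (j.factorial : ℝ) * ((l - 2 * j).factorial : ℝ) *
      Real.Gamma ((j : ℝ) + ((d : ℝ) - 1) / 2)) by
    rw [div_mul_eq_mul_div, ← mul_pow]; norm_num]
  ring

lemma gam_pos {d : ℕ} (hd : 2 ≤ d) (j : ℕ) :
    0 < Real.Gamma ((j : ℝ) + ((d : ℝ) - 1) / 2) := by
  apply Real.Gamma_pos_of_pos
  have : (2:ℝ) ≤ (d:ℝ) := by exact_mod_cast hd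
  have hj : (0:ℝ) ≤ (j:ℝ) := Nat.cast_nonneg j
  nlinarith

lemma denom_pos {d : ℕ} (hd : 2 ≤ d) (l j : ℕ) :
    0 < (4 ^ j * (j.factorial : ℝ) * ((l - 2 * j).factorial : ℝ) *
      Real.Gamma ((j : ℝ) + ((d : ℝ) - 1) / 2)) := by
  have := gam_pos hd j
  positivity

lemma NN_mul {p q : Polynomial ℝ} (hp : ∀ n, 0 ≤ p.coeff n) (hq : ∀ n, 0 ≤ q.coeff n) :
    ∀ n, 0 ≤ (p * q).coeff n := by
  intro n
  rw [Polynomial.coeff_mul]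
  exact Finset.sum_nonneg fun x _ => mul_nonneg (hp _) (hq _)

lemma NN_pow {p : Polynomial ℝ} (hp : ∀ n, 0 ≤ p.coeff n) (m : ℕ) :
    ∀ n, 0 ≤ (p ^ m).coeff n := by
  induction m with
  | zero => intro n; simp [Polynomial.coeff_one]; split <;> norm_num
  | succ i ih => rw [pow_succ]; exact NN_mul ih hp

lemma NN_X : ∀ n, 0 ≤ (Polynomial.X : Polynomial ℝ).coeff n := by
  intro n; rw [Polynomial.coeff_X]; split <;> norm_num

lemma NN_X_add_C {a : ℝ} (ha : 0 ≤ a) : ∀ n, 0 ≤ (Polynomial.X + Polynomial.C a).coeff n := by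
  intro n
  rw [Polynomial.coeff_add, Polynomial.coeff_X, Polynomial.coeff_C]
  split <;> split <;> simp_all <;> linarith

lemma NN_Wpoly (l j : ℕ) : ∀ n, 0 ≤ (Wpoly l j).coeff n :=
  NN_mul (NN_mul (NN_pow (NN_X_add_C (by norm_num)) j) (NN_pow (NN_X_add_C (by norm_num)) _))
    (NN_pow NN_X j)

lemma nn_eval_nonneg {p : Polynomial ℝ} (hp : ∀ n, 0 ≤ p.coeff n) {t : ℝ} (ht : 0 ≤ t) :
    0 ≤ p.eval t := by
  rw [Polynomial.eval_eq_sum_range]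
  exact Finset.sum_nonneg fun i _ => mul_nonneg (hp i) (pow_nonneg ht i)

lemma nn_coeff_le_eval {p : Polynomial ℝ} (hp : ∀ n, 0 ≤ p.coeff n) {t : ℝ} (ht : 0 ≤ t)
    (n : ℕ) : p.coeff n * t ^ n ≤ p.eval t := by
  rcases le_or_gt n p.natDegree with h | h
  · rw [Polynomial.eval_eq_sum_range]
    exact Finset.single_le_sum (f := fun i => p.coeff i * t ^ i)
      (fun i _ => mul_nonneg (hp i) (pow_nonneg ht i))
      (Finset.mem_range.2 (Nat.lt_succ_of_le h))
  · rw [Polynomial.coeff_eq_zero_of_natDegree_lt h, zero_mul]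
    exact nn_eval_nonneg hp ht

def legTerm (d k l j : ℕ) : ℝ :=
  ((l.factorial : ℝ) * Real.Gamma (((d : ℝ) - 1) / 2)) /
    (4 ^ j * (j.factorial : ℝ) * ((l - 2 * j).factorial : ℝ) *
      Real.Gamma ((j : ℝ) + ((d : ℝ) - 1) / 2)) * (Wpoly l j).coeff k

lemma legTerm_nonneg {d : ℕ} (hd : 2 ≤ d) (k l j : ℕ) : 0 ≤ legTerm d k l j := by
  apply mul_nonneg
  · apply div_nonneg
    · have := Real.Gamma_pos_of_pos (show (0:ℝ) < ((d:ℝ)-1)/2 by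
        have : (2:ℝ) ≤ (d:ℝ) := by exact_mod_cast hd
        linarith)
      positivity
    · exact (denom_pos hd l j).le
  · exact NN_Wpoly l j k

lemma coeff_taylor_Qpoly (d k l : ℕ) :
    (Polynomial.taylor 1 (Qpoly d l)).coeff k = ∑ j ∈ Finset.range (l / 2 + 1), legTerm d k l j := by
  rw [taylor_Qpoly, Polynomial.coeff_C_mul, Polynomial.finset_sum_coeff, Finset.mul_sum]
  refine Finset.sum_congr rfl fun j _ => ?_
  rw [Polynomial.coeff_C_mul, legTerm]
  ring

lemma legCoeff_eq_sum (d k l : ℕ) :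
    legCoeff d k l = (-1) ^ k * ∑ j ∈ Finset.range (l / 2 + 1), legTerm d k l j := by
  rw [legCoeff_eq_taylor, coeff_taylor_Qpoly]

lemma legCoeff_abs {d : ℕ} (hd : 2 ≤ d) (k l : ℕ) :
    |legCoeff d k l| = ∑ j ∈ Finset.range (l / 2 + 1), legTerm d k l j := by
  rw [legCoeff_eq_sum, abs_mul, abs_pow, abs_neg, abs_one, one_pow, one_mul,
    abs_of_nonneg (Finset.sum_nonneg fun j _ => legTerm_nonneg hd k l j)]

def legA (d j : ℕ) : ℝ :=
  Real.Gamma (((d : ℝ) - 1) / 2) * 3 ^ j * Real.exp 1 /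
    (4 ^ j * (j.factorial : ℝ) * Real.Gamma ((j : ℝ) + ((d : ℝ) - 1) / 2))

lemma legA_pos {d : ℕ} (hd : 2 ≤ d) (j : ℕ) : 0 < legA d j := by
  have h1 := gam_pos hd j
  have h2 : 0 < Real.Gamma (((d : ℝ) - 1) / 2) := by
    apply Real.Gamma_pos_of_pos
    have : (2:ℝ) ≤ (d:ℝ) := by exact_mod_cast hd
    linarith
  have := Real.exp_pos 1
  rw [legA]; positivity

lemma legTerm_le {d k l j : ℕ} (hd : 2 ≤ d) (hl : 1 ≤ l) (hjl : j ∈ Finset.range (l / 2 + 1)) :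
    legTerm d k l j ≤ if j ≤ k then legA d j * (l : ℝ) ^ (2 * k) else 0 := by
  have h2j : 2 * j ≤ l := by
    have := Finset.mem_range.1 hjl; omega
  set W' : Polynomial ℝ :=
    (Polynomial.X + Polynomial.C 2) ^ j * (Polynomial.X + Polynomial.C 1) ^ (l - 2 * j) with hW'
  have hWc : ∀ m, (Wpoly l j).coeff m = if j ≤ m then W'.coeff (m - j) else 0 := by
    intro m
    rw [Wpoly, Polynomial.coeff_mul_X_pow']
  by_cases hjk : j ≤ k
  · rw [if_pos hjk]
    have hW'NN : ∀ n, 0 ≤ W'.coeff n :=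
      NN_mul (NN_pow (NN_X_add_C (by norm_num)) j) (NN_pow (NN_X_add_C (by norm_num)) _)
    have hlR : (1:ℝ) ≤ (l:ℝ) := by exact_mod_cast hl
    have hlpos : (0:ℝ) < (l:ℝ) := by linarith
    -- eval bound
    have heval : W'.eval ((1:ℝ) / (l:ℝ)) ≤ 3 ^ j * Real.exp 1 := by
      rw [hW', Polynomial.eval_mul, Polynomial.eval_pow, Polynomial.eval_pow,
        Polynomial.eval_add, Polynomial.eval_add, Polynomial.eval_X, Polynomial.eval_C,
        Polynomial.eval_C]
      have hb1 : (1 / (l:ℝ) + 2) ≤ 3 := by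
        have : 1 / (l:ℝ) ≤ 1 := by
          rw [div_le_one hlpos]; exact hlR
        linarith
      have hb1' : (0:ℝ) ≤ 1 / (l:ℝ) + 2 := by positivity
      have hb2 : (1 / (l:ℝ) + 1) ^ (l - 2 * j) ≤ Real.exp 1 := by
        have hbase : (1:ℝ) ≤ 1 / (l:ℝ) + 1 := by
          have : (0:ℝ) ≤ 1 / (l:ℝ) := by positivity
          linarith
        have h1 : (1 / (l:ℝ) + 1) ^ (l - 2 * j) ≤ (1 / (l:ℝ) + 1) ^ l :=
          pow_le_pow_right₀ hbase (Nat.sub_le l (2 * j))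
        have h2 : (1 / (l:ℝ) + 1) ^ l ≤ Real.exp (1 / (l:ℝ)) ^ l := by
          apply pow_le_pow_left₀ (by positivity)
          have := Real.add_one_le_exp (1 / (l:ℝ))
          linarith
        have h3 : Real.exp (1 / (l:ℝ)) ^ l = Real.exp 1 := by
          rw [← Real.exp_nat_mul]
          congr 1
          field_simp
        calc (1 / (l:ℝ) + 1) ^ (l - 2*j) ≤ (1 / (l:ℝ) + 1) ^ l := h1
          _ ≤ Real.exp (1/(l:ℝ)) ^ l := h2
          _ = Real.exp 1 := h3
      exact mul_le_mul (pow_le_pow_left₀ hb1' hb1 j) hb2 (by positivity) (by positivity)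
    -- coefficient bound
    have hcoeffle : W'.coeff (k - j) ≤ 3 ^ j * Real.exp 1 * (l:ℝ) ^ (k - j) := by
      have h0 := nn_coeff_le_eval hW'NN (by positivity : (0:ℝ) ≤ 1 / l) (k - j)
      have hpow : ((1:ℝ) / l) ^ (k - j) * (l:ℝ) ^ (k - j) = 1 := by
        rw [← mul_pow]; field_simp; simp
      calc W'.coeff (k - j) = W'.coeff (k - j) * (((1:ℝ)/l) ^ (k-j) * (l:ℝ)^(k-j)) := by
            rw [hpow, mul_one]
        _ = (W'.coeff (k - j) * ((1:ℝ)/l) ^ (k-j)) * (l:ℝ)^(k-j) := by ring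
        _ ≤ W'.eval ((1:ℝ)/(l:ℝ)) * (l:ℝ)^(k-j) := by
            apply mul_le_mul_of_nonneg_right h0 (by positivity)
        _ ≤ 3 ^ j * Real.exp 1 * (l:ℝ)^(k-j) := by
            apply mul_le_mul_of_nonneg_right heval (by positivity)
    -- factorial identity
    have hfac : (l.factorial : ℝ) = ((l - 2*j).factorial : ℝ) * (l.descFactorial (2*j) : ℝ) := by
      exact_mod_cast congrArg (Nat.cast (R := ℝ)) (Nat.factorial_mul_descFactorial h2j).symm
    have hdesc : (l.descFactorial (2*j) : ℝ) ≤ (l:ℝ) ^ (2*j) := by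
      exact_mod_cast Nat.cast_le.2 (Nat.descFactorial_le_pow l (2*j))
    have hgam := gam_pos hd j
    have hgam0 : 0 < Real.Gamma (((d : ℝ) - 1) / 2) := by
      apply Real.Gamma_pos_of_pos
      have : (2:ℝ) ≤ (d:ℝ) := by exact_mod_cast hd
      linarith
    have hfacpos : (0:ℝ) < ((l - 2*j).factorial : ℝ) := by exact_mod_cast Nat.factorial_pos _
    have hjfpos : (0:ℝ) < (j.factorial : ℝ) := by exact_mod_cast Nat.factorial_pos _
    have E1 : legTerm d k l j =
        Real.Gamma (((d : ℝ) - 1) / 2) /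
          (4 ^ j * (j.factorial : ℝ) * Real.Gamma ((j : ℝ) + ((d : ℝ) - 1) / 2)) *
          ((l.descFactorial (2*j) : ℝ) * W'.coeff (k - j)) := by
      rw [legTerm, hWc k, if_pos hjk, hfac]
      rw [show ((l - 2*j).factorial : ℝ) * (l.descFactorial (2*j) : ℝ) *
          Real.Gamma (((d:ℝ)-1)/2) = ((l - 2*j).factorial : ℝ) *
          ((l.descFactorial (2*j) : ℝ) * Real.Gamma (((d:ℝ)-1)/2)) from by ring]
      rw [show ((4:ℝ)^j * (j.factorial : ℝ) * ((l - 2*j).factorial : ℝ) *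
          Real.Gamma ((j:ℝ) + ((d:ℝ)-1)/2)) = ((l - 2*j).factorial : ℝ) *
          ((4:ℝ)^j * (j.factorial : ℝ) * Real.Gamma ((j:ℝ) + ((d:ℝ)-1)/2)) from by ring]
      rw [mul_div_mul_left _ _ hfacpos.ne']
      ring
    have E2 : (l.descFactorial (2*j) : ℝ) * W'.coeff (k - j) ≤
        3 ^ j * Real.exp 1 * (l:ℝ) ^ (2 * k) := by
      have hkj : (2*j) + (k - j) = k + j := by omega
      have s1 : (l.descFactorial (2*j) : ℝ) * W'.coeff (k - j) ≤
          (l:ℝ) ^ (2*j) * (3 ^ j * Real.exp 1 * (l:ℝ) ^ (k - j)) := by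
        apply mul_le_mul hdesc hcoeffle (hW'NN _) (by positivity)
      have s2 : (l:ℝ) ^ (2*j) * (3 ^ j * Real.exp 1 * (l:ℝ) ^ (k - j)) =
          3 ^ j * Real.exp 1 * (l:ℝ) ^ (k + j) := by
        rw [← hkj, pow_add]; ring
      have s3 : (l:ℝ) ^ (k + j) ≤ (l:ℝ) ^ (2 * k) :=
        pow_le_pow_right₀ hlR (by omega)
      calc (l.descFactorial (2*j) : ℝ) * W'.coeff (k - j)
        _ ≤ 3 ^ j * Real.exp 1 * (l:ℝ) ^ (k + j) := by rw [← s2]; exact s1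
        _ ≤ 3 ^ j * Real.exp 1 * (l:ℝ) ^ (2 * k) :=
            mul_le_mul_of_nonneg_left s3 (by positivity)
    rw [E1]
    calc Real.Gamma (((d : ℝ) - 1) / 2) /
          (4 ^ j * (j.factorial : ℝ) * Real.Gamma ((j : ℝ) + ((d : ℝ) - 1) / 2)) *
          ((l.descFactorial (2*j) : ℝ) * W'.coeff (k - j))
      _ ≤ Real.Gamma (((d : ℝ) - 1) / 2) /
            (4 ^ j * (j.factorial : ℝ) * Real.Gamma ((j : ℝ) + ((d : ℝ) - 1) / 2)) *
            (3 ^ j * Real.exp 1 * (l:ℝ) ^ (2 * k)) :=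
          mul_le_mul_of_nonneg_left E2 (by positivity)
      _ = legA d j * (l : ℝ) ^ (2 * k) := by rw [legA]; ring
  · rw [if_neg hjk, legTerm, hWc k, if_neg hjk, mul_zero]

def legCA (d k : ℕ) : ℝ := ∑ j ∈ Finset.range (k + 1), legA d j

lemma legCA_pos {d : ℕ} (hd : 2 ≤ d) (k : ℕ) : 0 < legCA d k := by
  apply Finset.sum_pos (fun j _ => legA_pos hd j)
  exact ⟨0, Finset.mem_range.2 (Nat.succ_pos k)⟩

lemma legCoeff_abs_le {d k l : ℕ} (hd : 2 ≤ d) (hl : 1 ≤ l) :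
    |legCoeff d k l| ≤ legCA d k * (l : ℝ) ^ (2 * k) := by
  rw [legCoeff_abs hd]
  calc ∑ j ∈ Finset.range (l / 2 + 1), legTerm d k l j
      ≤ ∑ j ∈ Finset.range (l / 2 + 1), (if j ≤ k then legA d j * (l : ℝ) ^ (2 * k) else 0) :=
        Finset.sum_le_sum fun j hj => legTerm_le hd hl hj
    _ = ∑ j ∈ (Finset.range (l / 2 + 1)).filter (· ≤ k), legA d j * (l : ℝ) ^ (2 * k) :=
        (Finset.sum_filter _ _).symm
    _ ≤ ∑ j ∈ Finset.range (k + 1), legA d j * (l : ℝ) ^ (2 * k) := by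
        apply Finset.sum_le_sum_of_subset_of_nonneg
        · intro j hj
          rw [Finset.mem_filter] at hj
          exact Finset.mem_range.2 (Nat.lt_succ_of_le hj.2)
        · intro j _ _
          have := legA_pos hd j
          positivity
    _ = legCA d k * (l : ℝ) ^ (2 * k) := by rw [legCA, Finset.sum_mul]

-- lower bound, case l ≥ 2k : the j = k term
lemma legCoeff_abs_ge_high {d k l : ℕ} (hd : 2 ≤ d) (h2k : 2 * k ≤ l) :
    (Real.Gamma (((d : ℝ) - 1) / 2) /
        (2 ^ k * (k.factorial : ℝ) * Real.Gamma ((k : ℝ) + ((d : ℝ) - 1) / 2))) *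
      (l.descFactorial (2 * k) : ℝ) ≤ |legCoeff d k l| := by
  rw [legCoeff_abs hd]
  have hkmem : k ∈ Finset.range (l / 2 + 1) := by
    rw [Finset.mem_range]
    omega
  have hterm : (Real.Gamma (((d : ℝ) - 1) / 2) /
        (2 ^ k * (k.factorial : ℝ) * Real.Gamma ((k : ℝ) + ((d : ℝ) - 1) / 2))) *
      (l.descFactorial (2 * k) : ℝ) ≤ legTerm d k l k := by
    have hWk : (Wpoly l k).coeff k = 2 ^ k := by
      rw [Wpoly, Polynomial.coeff_mul_X_pow', if_pos le_rfl, Nat.sub_self,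
        Polynomial.coeff_zero_eq_eval_zero]
      simp
    have hfac : (l.factorial : ℝ) = ((l - 2*k).factorial : ℝ) * (l.descFactorial (2*k) : ℝ) := by
      exact_mod_cast congrArg (Nat.cast (R := ℝ)) (Nat.factorial_mul_descFactorial h2k).symm
    have hfacpos : (0:ℝ) < ((l - 2*k).factorial : ℝ) := by exact_mod_cast Nat.factorial_pos _
    rw [legTerm, hWk, hfac]
    rw [show ((l - 2*k).factorial : ℝ) * (l.descFactorial (2*k) : ℝ) *
        Real.Gamma (((d:ℝ)-1)/2) = ((l - 2*k).factorial : ℝ) *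
        ((l.descFactorial (2*k) : ℝ) * Real.Gamma (((d:ℝ)-1)/2)) from by ring]
    rw [show ((4:ℝ)^k * (k.factorial : ℝ) * ((l - 2*k).factorial : ℝ) *
        Real.Gamma ((k:ℝ) + ((d:ℝ)-1)/2)) = ((l - 2*k).factorial : ℝ) *
        ((4:ℝ)^k * (k.factorial : ℝ) * Real.Gamma ((k:ℝ) + ((d:ℝ)-1)/2)) from by ring]
    rw [mul_div_mul_left _ _ hfacpos.ne']
    rw [show ((4:ℝ)^k) = (2:ℝ)^k * 2^k from by rw [← mul_pow]; norm_num]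
    have hgam := gam_pos hd k
    have hkf : (0:ℝ) < (k.factorial : ℝ) := by exact_mod_cast Nat.factorial_pos _
    apply le_of_eq
    rw [div_mul_eq_mul_div, div_mul_eq_mul_div, div_eq_div_iff (by positivity) (by positivity)]
    ring
  calc (Real.Gamma (((d : ℝ) - 1) / 2) /
        (2 ^ k * (k.factorial : ℝ) * Real.Gamma ((k : ℝ) + ((d : ℝ) - 1) / 2))) *
      (l.descFactorial (2 * k) : ℝ) ≤ legTerm d k l k := hterm
    _ ≤ ∑ j ∈ Finset.range (l / 2 + 1), legTerm d k l j :=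
        Finset.single_le_sum (fun j _ => legTerm_nonneg hd k l j) hkmem

-- lower bound, case k ≤ l : the j = 0 term gives |legCoeff| ≥ choose l k ≥ 1
lemma legCoeff_abs_ge_one {d k l : ℕ} (hd : 2 ≤ d) (hkl : k ≤ l) :
    (1 : ℝ) ≤ |legCoeff d k l| := by
  rw [legCoeff_abs hd]
  have h0mem : (0:ℕ) ∈ Finset.range (l / 2 + 1) := by
    rw [Finset.mem_range]; omega
  have hterm : (1:ℝ) ≤ legTerm d k l 0 := by
    have hW0 : (Wpoly l 0).coeff k = (l.choose k : ℝ) := by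
      rw [Wpoly]
      simp [Polynomial.coeff_X_add_one_pow]
    rw [legTerm, hW0]
    have hch : (1:ℝ) ≤ (l.choose k : ℝ) := by
      exact_mod_cast Nat.succ_le_of_lt (Nat.choose_pos hkl)
    have hgam0 : 0 < Real.Gamma (((d : ℝ) - 1) / 2) := by
      apply Real.Gamma_pos_of_pos
      have : (2:ℝ) ≤ (d:ℝ) := by exact_mod_cast hd
      linarith
    have heq : ((l.factorial : ℝ) * Real.Gamma (((d : ℝ) - 1) / 2)) /
        (4 ^ 0 * ((0:ℕ).factorial : ℝ) * ((l - 2 * 0).factorial : ℝ) *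
          Real.Gamma (((0:ℕ) : ℝ) + ((d : ℝ) - 1) / 2)) = 1 := by
      have hlf : (0:ℝ) < (l.factorial : ℝ) := by exact_mod_cast Nat.factorial_pos _
      simp only [pow_zero, Nat.factorial_zero, Nat.cast_one, Nat.mul_zero, Nat.sub_zero,
        Nat.cast_zero, one_mul, zero_add]
      rw [div_eq_one_iff_eq (by positivity)]
    rw [heq, one_mul]
    exact hch
  calc (1:ℝ) ≤ legTerm d k l 0 := hterm
    _ ≤ ∑ j ∈ Finset.range (l / 2 + 1), legTerm d k l j :=
        Finset.single_le_sum (fun j _ => legTerm_nonneg hd k l j) h0mem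

lemma legCoeff_eq_zero {d k l : ℕ} (hd : 2 ≤ d) (hlk : l < k) : legCoeff d k l = 0 := by
  rw [legCoeff_eq_sum]
  have hz : ∀ j ∈ Finset.range (l / 2 + 1), legTerm d k l j = 0 := by
    intro j hj
    have h2j : 2 * j ≤ l := by
      have := Finset.mem_range.1 hj; omega
    have hdeg : (Wpoly l j).natDegree ≤ l := by
      rw [Wpoly]
      refine le_trans (Polynomial.natDegree_mul_le) ?_
      have h1 : ((Polynomial.X + Polynomial.C (2:ℝ)) ^ j).natDegree ≤ j := by
        refine le_trans (Polynomial.natDegree_pow_le) ?_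
        rw [Polynomial.natDegree_X_add_C]; omega
      have h2 : ((Polynomial.X + Polynomial.C (1:ℝ)) ^ (l - 2*j)).natDegree ≤ l - 2*j := by
        refine le_trans (Polynomial.natDegree_pow_le) ?_
        rw [Polynomial.natDegree_X_add_C]; omega
      have h3 : ((Polynomial.X : Polynomial ℝ) ^ j).natDegree ≤ j := by
        simp [Polynomial.natDegree_X_pow]
      have h4 := Polynomial.natDegree_mul_le (p := (Polynomial.X + Polynomial.C (2:ℝ)) ^ j)
        (q := (Polynomial.X + Polynomial.C (1:ℝ)) ^ (l - 2*j))
      omega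
    have : (Wpoly l j).coeff k = 0 :=
      Polynomial.coeff_eq_zero_of_natDegree_lt (lt_of_le_of_lt hdeg hlk)
    rw [legTerm, this, mul_zero]
  rw [Finset.sum_eq_zero hz, mul_zero]

lemma part1 {d k : ℕ} (hd : 2 ≤ d) (hk : 1 ≤ k) :
    ∃ c C : ℝ, 0 < c ∧ c ≤ C ∧
      ∀ l : ℕ, k ≤ l →
        c ≤ |legCoeff d k l| / (2 ^ k * ((l : ℝ) * ((l : ℝ) + d - 2)) ^ k) ∧
        |legCoeff d k l| / (2 ^ k * ((l : ℝ) * ((l : ℝ) + d - 2)) ^ k) ≤ C := by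
  have hdR : (2:ℝ) ≤ (d:ℝ) := by exact_mod_cast hd
  have hgam0 : 0 < Real.Gamma (((d : ℝ) - 1) / 2) := by
    apply Real.Gamma_pos_of_pos; linarith
  have hgamk := gam_pos hd k
  have hkf : (0:ℝ) < (k.factorial : ℝ) := by exact_mod_cast Nat.factorial_pos _
  have hkR : (1:ℝ) ≤ (k:ℝ) := by exact_mod_cast hk
  set c1 : ℝ := Real.Gamma (((d : ℝ) - 1) / 2) /
      (2 ^ k * (k.factorial : ℝ) * Real.Gamma ((k : ℝ) + ((d : ℝ) - 1) / 2)) /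
      ((2*(k:ℝ)) ^ (2*k) * 2 ^ k * (d:ℝ) ^ k) with hc1
  set c2 : ℝ := 1 / (2 ^ k * ((2*(k:ℝ)) * (2*(k:ℝ) + d)) ^ k) with hc2
  have hc1pos : 0 < c1 := by
    rw [hc1]
    have hd0 : (0:ℝ) < (d:ℝ) := by linarith
    positivity
  have hc2pos : 0 < c2 := by
    rw [hc2]
    have hd0 : (0:ℝ) < (d:ℝ) := by linarith
    positivity
  set C0 : ℝ := legCA d k / 2 ^ k with hC0
  have hC0pos : 0 < C0 := by
    rw [hC0]
    have := legCA_pos hd k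
    positivity
  refine ⟨min c1 c2, max C0 (min c1 c2), lt_min hc1pos hc2pos, le_max_right _ _, ?_⟩
  intro l hkl
  have hl1 : 1 ≤ l := le_trans hk hkl
  have hlR : (1:ℝ) ≤ (l:ℝ) := by exact_mod_cast hl1
  have hPl : (0:ℝ) < (l:ℝ) * ((l:ℝ) + d - 2) := by nlinarith
  have hB : (0:ℝ) < 2 ^ k * ((l : ℝ) * ((l : ℝ) + d - 2)) ^ k := by positivity
  constructor
  · -- lower bound
    rcases le_or_gt (2 * k) l with hcase | hcase
    · -- l ≥ 2k, use c1
      refine le_trans (min_le_left c1 c2) ?_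
      rw [le_div_iff₀ hB]
      have hdesc : ((l:ℝ) / (2*(k:ℝ))) ^ (2*k) ≤ (l.descFactorial (2*k) : ℝ) := by
        have h1 : ((l + 1 - 2*k : ℕ) : ℝ) ^ (2*k) ≤ (l.descFactorial (2*k) : ℝ) := by
          exact_mod_cast Nat.cast_le.2 (Nat.pow_sub_le_descFactorial l (2*k))
        have h2 : ((l:ℝ) / (2*(k:ℝ))) ≤ ((l + 1 - 2*k : ℕ) : ℝ) := by
          have hc : ((l + 1 - 2*k : ℕ) : ℝ) = (l:ℝ) + 1 - 2*(k:ℝ) := by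
            have : 2*k ≤ l + 1 := by omega
            push_cast [this]
            ring
          rw [hc, div_le_iff₀ (by linarith)]
          have hlk2 : (2*(k:ℝ)) ≤ (l:ℝ) := by exact_mod_cast hcase
          nlinarith
        calc ((l:ℝ) / (2*(k:ℝ))) ^ (2*k) ≤ ((l + 1 - 2*k : ℕ) : ℝ) ^ (2*k) := by
              apply pow_le_pow_left₀ (by positivity) h2
          _ ≤ (l.descFactorial (2*k) : ℝ) := h1
      have hmain := legCoeff_abs_ge_high hd hcase
      have hPd : ((l : ℝ) * ((l : ℝ) + d - 2)) ^ k ≤ (d:ℝ) ^ k * ((l:ℝ))^(2*k) := by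
        have : (l : ℝ) * ((l : ℝ) + d - 2) ≤ (d:ℝ) * ((l:ℝ) * (l:ℝ)) := by
          have key : (0:ℝ) ≤ ((l:ℝ)) * (((d:ℝ)-1)*((l:ℝ)-1)) :=
            mul_nonneg (by linarith) (mul_nonneg (by linarith) (by linarith))
          nlinarith [key]
        calc ((l : ℝ) * ((l : ℝ) + d - 2)) ^ k ≤ ((d:ℝ) * ((l:ℝ) * (l:ℝ))) ^ k := by
              apply pow_le_pow_left₀ (le_of_lt hPl) this
          _ = (d:ℝ) ^ k * ((l:ℝ))^(2*k) := by rw [mul_pow, two_mul, pow_add]; ring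
      have hdiv : ((l:ℝ) / (2*(k:ℝ))) ^ (2*k) = (l:ℝ)^(2*k) / (2*(k:ℝ))^(2*k) := div_pow _ _ _
      -- c1 * B ≤ |legCoeff|
      have hstep : c1 * (2 ^ k * ((l : ℝ) * ((l : ℝ) + d - 2)) ^ k) ≤
          Real.Gamma (((d : ℝ) - 1) / 2) /
            (2 ^ k * (k.factorial : ℝ) * Real.Gamma ((k : ℝ) + ((d : ℝ) - 1) / 2)) *
            (l.descFactorial (2 * k) : ℝ) := by
        rw [hc1]
        have hGpos : (0:ℝ) < Real.Gamma (((d : ℝ) - 1) / 2) /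
            (2 ^ k * (k.factorial : ℝ) * Real.Gamma ((k : ℝ) + ((d : ℝ) - 1) / 2)) := by
          positivity
        set G := Real.Gamma (((d : ℝ) - 1) / 2) /
            (2 ^ k * (k.factorial : ℝ) * Real.Gamma ((k : ℝ) + ((d : ℝ) - 1) / 2)) with hG
        calc G / ((2*(k:ℝ)) ^ (2*k) * 2 ^ k * (d:ℝ) ^ k) *
              (2 ^ k * ((l : ℝ) * ((l : ℝ) + d - 2)) ^ k)
            ≤ G / ((2*(k:ℝ)) ^ (2*k) * 2 ^ k * (d:ℝ) ^ k) *
              (2 ^ k * ((d:ℝ) ^ k * ((l:ℝ))^(2*k))) := by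
              exact mul_le_mul_of_nonneg_left
                (mul_le_mul_of_nonneg_left hPd (by positivity)) (by positivity)
          _ = G * ((l:ℝ)^(2*k) / (2*(k:ℝ))^(2*k)) := by
              have hd0 : (0:ℝ) < (d:ℝ) := by linarith
              field_simp
          _ ≤ G * (l.descFactorial (2*k) : ℝ) := by
              apply mul_le_mul_of_nonneg_left _ hGpos.le
              rw [← hdiv]; exact hdesc
      exact le_trans hstep hmain
    · -- k ≤ l < 2k, use c2
      refine le_trans (min_le_right c1 c2) ?_
      rw [le_div_iff₀ hB]
      have h1 := legCoeff_abs_ge_one hd hkl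
      have hPb : ((l : ℝ) * ((l : ℝ) + d - 2)) ^ k ≤ ((2*(k:ℝ)) * (2*(k:ℝ) + d)) ^ k := by
        apply pow_le_pow_left₀ (le_of_lt hPl)
        have hl2k : (l:ℝ) ≤ 2*(k:ℝ) := by exact_mod_cast le_of_lt hcase
        nlinarith
      calc c2 * (2 ^ k * ((l : ℝ) * ((l : ℝ) + d - 2)) ^ k)
          ≤ c2 * (2 ^ k * ((2*(k:ℝ)) * (2*(k:ℝ) + d)) ^ k) := by
            apply mul_le_mul_of_nonneg_left _ hc2pos.le
            apply mul_le_mul_of_nonneg_left hPb (by positivity)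
        _ = 1 := by
            rw [hc2, one_div, inv_mul_cancel₀ (by positivity)]
        _ ≤ |legCoeff d k l| := h1
  · -- upper bound
    refine le_trans ?_ (le_max_left C0 _)
    rw [div_le_iff₀ hB]
    have hup := legCoeff_abs_le (k := k) hd hl1
    have hpow : ((l:ℝ))^(2*k) ≤ ((l : ℝ) * ((l : ℝ) + d - 2)) ^ k := by
      have : (l:ℝ) * (l:ℝ) ≤ (l : ℝ) * ((l : ℝ) + d - 2) := by nlinarith
      calc ((l:ℝ))^(2*k) = ((l:ℝ) * (l:ℝ)) ^ k := by rw [two_mul, pow_add, ← mul_pow]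
        _ ≤ ((l : ℝ) * ((l : ℝ) + d - 2)) ^ k := by
            apply pow_le_pow_left₀ (by positivity) this
    calc |legCoeff d k l| ≤ legCA d k * (l : ℝ) ^ (2 * k) := hup
      _ ≤ legCA d k * ((l : ℝ) * ((l : ℝ) + d - 2)) ^ k := by
          apply mul_le_mul_of_nonneg_left hpow (legCA_pos hd k).le
      _ = C0 * (2 ^ k * ((l : ℝ) * ((l : ℝ) + d - 2)) ^ k) := by
          rw [hC0]
          field_simp

end AuxPart1


section AuxPart2

open scoped InnerProductSpace

variable {d : ℕ} (B : SHBasis d)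

lemma Y_continuous (l : ℕ) (j : Fin (B.ν l)) : Continuous (B.Y l j) := by
  obtain ⟨p, -, -, hY⟩ := B.harmonic l j
  have hfe : B.Y l j = (fun x => MvPolynomial.eval x p) ∘
      (fun η : Sphere d => fun i => (((η : EuclideanSpace ℝ (Fin d)) i : ℝ) : ℂ)) :=
    funext fun η => hY η
  rw [hfe]
  refine (MvPolynomial.continuous_eval (p := p)).comp ?_
  refine continuous_pi fun i => ?_
  exact Complex.continuous_ofReal.comp
    ((EuclideanSpace.proj (𝕜 := ℝ) (i : Fin d)).continuous.comp continuous_subtype_val)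

lemma Y_memLp (l : ℕ) (j : Fin (B.ν l)) : MemLp (B.Y l j) 2 (sphereMeasure d) := by
  have hmeas : AEStronglyMeasurable (B.Y l j) (sphereMeasure d) :=
    (Y_continuous B l j).aestronglyMeasurable
  have h1 : (∫ η, B.Y l j η * conj (B.Y l j η) ∂(sphereMeasure d)) = 1 := by
    have := B.orthonormal l j l j
    simpa using this
  have hint : Integrable (fun η => B.Y l j η * conj (B.Y l j η)) (sphereMeasure d) := by
    by_contra hc
    rw [integral_undef hc] at h1
    exact one_ne_zero h1.symm
  rw [memLp_two_iff_integrable_sq_norm hmeas]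
  have heq : (fun η => ‖B.Y l j η‖ ^ 2) =
      fun η => RCLike.re (B.Y l j η * conj (B.Y l j η)) := by
    funext η
    rw [RCLike.mul_conj]
    norm_cast
  rw [heq]
  exact hint.re

def shE (B : SHBasis d) : (Σ l : ℕ, Fin (B.ν l)) → Lp ℂ 2 (sphereMeasure d) :=
  fun i => (Y_memLp B i.1 i.2).toLp (B.Y i.1 i.2)

lemma inner_shE (i : Σ l : ℕ, Fin (B.ν l)) (F : Lp ℂ 2 (sphereMeasure d)) :
    (inner ℂ (shE B i) F : ℂ) = ∫ η, F η * conj (B.Y i.1 i.2 η) ∂(sphereMeasure d) := by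
  rw [MeasureTheory.L2.inner_def]
  refine integral_congr_ae ?_
  filter_upwards [(Y_memLp B i.1 i.2).coeFn_toLp] with η hη
  rw [RCLike.inner_apply', show (shE B i : Sphere d → ℂ) η = B.Y i.1 i.2 η from hη, mul_comm]

lemma inner_shE_memLp (i : Σ l : ℕ, Fin (B.ν l)) {f : Sphere d → ℂ}
    (hf : MemLp f 2 (sphereMeasure d)) :
    (inner ℂ (shE B i) (hf.toLp f) : ℂ) = shCoeff d B f i.1 i.2 := by
  rw [inner_shE, shCoeff]
  refine integral_congr_ae ?_
  filter_upwards [hf.coeFn_toLp] with η hη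
  rw [hη]

lemma shE_orthonormal : Orthonormal ℂ (shE B) := by
  classical
  rw [orthonormal_iff_ite]
  rintro ⟨l, j⟩ ⟨l', j'⟩
  rw [inner_shE]
  have h1 : (∫ η, (shE B ⟨l', j'⟩ : Sphere d → ℂ) η * conj (B.Y l j η) ∂(sphereMeasure d)) =
      ∫ η, B.Y l' j' η * conj (B.Y l j η) ∂(sphereMeasure d) := by
    refine integral_congr_ae ?_
    filter_upwards [(Y_memLp B l' j').coeFn_toLp] with η hη
    rw [show (shE B ⟨l', j'⟩ : Sphere d → ℂ) η = B.Y l' j' η from hη]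
  rw [h1, B.orthonormal l' j' l j]
  have hiff : (l' = l ∧ (j' : ℕ) = (j : ℕ)) ↔
      ((⟨l, j⟩ : Σ l, Fin (B.ν l)) = ⟨l', j'⟩) := by
    constructor
    · rintro ⟨rfl, h2⟩
      have : j' = j := Fin.ext h2
      subst this; rfl
    · rintro h
      obtain ⟨h1, h2⟩ := Sigma.mk.inj_iff.1 h
      subst h1
      rw [eq_of_heq h2]
      exact ⟨rfl, rfl⟩
  rw [if_congr hiff rfl rfl]

end AuxPart2

/-- The multiplier `c_(k,l) / (2^k (l(l+d-2))^k)` is bounded above and below for `l ≥ k`,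
and consequently the multiplier operator `T_k` is a bounded linear operator on
`L²(S^{d-1})`. -/
theorem Tk_bounded
    (d : ℕ) (hd : 2 ≤ d) (B : SHBasis d) (k : ℕ) (hk : 1 ≤ k) :
    (∃ c C : ℝ, 0 < c ∧ c ≤ C ∧
      ∀ l : ℕ, k ≤ l →
        c ≤ |legCoeff d k l| / (2 ^ k * ((l : ℝ) * ((l : ℝ) + d - 2)) ^ k) ∧
        |legCoeff d k l| / (2 ^ k * ((l : ℝ) * ((l : ℝ) + d - 2)) ^ k) ≤ C) ∧
    ∃ C' : ℝ, 0 < C' ∧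
      ∀ g : Sphere d → ℂ, MemLp g 2 (sphereMeasure d) →
        ∃ h : Sphere d → ℂ, MemLp h 2 (sphereMeasure d) ∧
          (∀ j, shCoeff d B h 0 j = 0) ∧
          (∀ l, 1 ≤ l → ∀ j, shCoeff d B h l j =
            ((legCoeff d k l / (2 ^ k * ((l : ℝ) * ((l : ℝ) + d - 2)) ^ k) : ℝ) : ℂ) *
              shCoeff d B g l j) ∧
          eLpNorm h 2 (sphereMeasure d) ≤ ENNReal.ofReal C' * eLpNorm g 2 (sphereMeasure d) := by
  classical
  obtain ⟨c, C, hc, hcC, hbnd⟩ := part1 hd hk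
  have hC0 : (0:ℝ) ≤ C := le_trans hc.le hcC
  refine ⟨⟨c, C, hc, hcC, hbnd⟩, max C 1, lt_of_lt_of_le one_pos (le_max_right C 1), ?_⟩
  intro g hg
  set G : Lp ℂ 2 (sphereMeasure d) := hg.toLp g with hG
  set e : (Σ l : ℕ, Fin (B.ν l)) → Lp ℂ 2 (sphereMeasure d) := shE B with he
  have horth : Orthonormal ℂ e := shE_orthonormal B
  have horth' := orthonormal_iff_ite.1 horth
  set mC : ℕ → ℂ := fun l =>
    ((legCoeff d k l / (2 ^ k * ((l : ℝ) * ((l : ℝ) + d - 2)) ^ k) : ℝ) : ℂ) with hmC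
  have hkne : k ≠ 0 := by omega
  have hmC0 : mC 0 = 0 := by
    simp only [hmC, Nat.cast_zero, zero_mul, zero_pow hkne, mul_zero, div_zero,
      Complex.ofReal_zero]
  have hmCb : ∀ l : ℕ, ‖mC l‖ ≤ C := by
    intro l
    rcases Nat.lt_or_ge l k with hl | hl
    · rcases Nat.eq_zero_or_pos l with rfl | hl0
      · rw [hmC0, norm_zero]; exact hC0
      · simp only [hmC, legCoeff_eq_zero hd hl, zero_div, Complex.ofReal_zero, norm_zero]
        exact hC0
    · obtain ⟨h1, h2⟩ := hbnd l hl
      have hl1 : 1 ≤ l := le_trans hk hl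
      have hlR : (1:ℝ) ≤ (l:ℝ) := by exact_mod_cast hl1
      have hdR : (2:ℝ) ≤ (d:ℝ) := by exact_mod_cast hd
      have hB : (0:ℝ) < 2 ^ k * ((l : ℝ) * ((l : ℝ) + d - 2)) ^ k := by
        have hPl : (0:ℝ) < (l:ℝ) * ((l:ℝ) + d - 2) := by nlinarith
        positivity
      calc ‖mC l‖ = |legCoeff d k l / (2 ^ k * ((l : ℝ) * ((l : ℝ) + d - 2)) ^ k)| :=
            RCLike.norm_ofReal _
        _ = |legCoeff d k l| / (2 ^ k * ((l : ℝ) * ((l : ℝ) + d - 2)) ^ k) := by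
            rw [abs_div, abs_of_pos hB]
        _ ≤ C := h2
  set a : (Σ l : ℕ, Fin (B.ν l)) → ℂ := fun i => mC i.1 * inner ℂ (e i) G with ha
  have hanorm : ∀ i, ‖a i‖ ≤ C * ‖(inner ℂ (e i) G : ℂ)‖ := by
    intro i
    rw [ha]
    calc ‖mC i.1 * inner ℂ (e i) G‖ = ‖mC i.1‖ * ‖(inner ℂ (e i) G : ℂ)‖ := norm_mul _ _
      _ ≤ C * ‖(inner ℂ (e i) G : ℂ)‖ :=
          mul_le_mul_of_nonneg_right (hmCb i.1) (norm_nonneg _)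
  have ha2 : Summable fun i => ‖a i‖ ^ 2 := by
    refine Summable.of_nonneg_of_le (fun i => by positivity)
      (fun i => ?_) ((horth.inner_products_summable G).mul_left (C ^ 2))
    calc ‖a i‖ ^ 2 ≤ (C * ‖(inner ℂ (e i) G : ℂ)‖) ^ 2 :=
          pow_le_pow_left₀ (norm_nonneg _) (hanorm i) 2
      _ = C ^ 2 * ‖(inner ℂ (e i) G : ℂ)‖ ^ 2 := by ring
  have hfam := horth.orthogonalFamily
  have hsum : Summable fun i => a i • e i := by
    have := (hfam.summable_iff_norm_sq_summable a).2 ha2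
    simpa only [LinearIsometry.toSpanSingleton_apply] using this
  set H : Lp ℂ 2 (sphereMeasure d) := ∑' i, a i • e i with hH
  have hHasSum : HasSum (fun i => a i • e i) H := hsum.hasSum
  have hinner : ∀ i0, (inner ℂ (e i0) H : ℂ) = a i0 := by
    intro i0
    have h1 : (innerSL ℂ (e i0)) H = ∑' i, (innerSL ℂ (e i0)) (a i • e i) :=
      ContinuousLinearMap.map_tsum _ hsum
    have h2 : ∀ i, (innerSL ℂ (e i0)) (a i • e i) = a i * (if i0 = i then 1 else 0) := by
      intro i
      rw [innerSL_apply_apply]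
      rw [inner_smul_right, horth' i0 i]
    calc (inner ℂ (e i0) H : ℂ) = ∑' i, (innerSL ℂ (e i0)) (a i • e i) := h1
      _ = a i0 := by
          rw [tsum_eq_single i0]
          · rw [h2 i0, if_pos rfl, mul_one]
          · intro b hb
            rw [h2 b, if_neg (fun hcon => hb hcon.symm), mul_zero]
  have hpartial : ∀ s : Finset (Σ l : ℕ, Fin (B.ν l)),
      ‖∑ i ∈ s, a i • e i‖ ≤ C * ‖G‖ := by
    intro s
    have hsq : ‖∑ i ∈ s, a i • e i‖ ^ 2 = ∑ i ∈ s, ‖a i‖ ^ 2 := by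
      have := hfam.norm_sum a s
      simpa only [LinearIsometry.toSpanSingleton_apply] using this
    have hle : ∑ i ∈ s, ‖a i‖ ^ 2 ≤ (C * ‖G‖) ^ 2 := by
      calc ∑ i ∈ s, ‖a i‖ ^ 2 ≤ ∑ i ∈ s, C ^ 2 * ‖(inner ℂ (e i) G : ℂ)‖ ^ 2 := by
            refine Finset.sum_le_sum fun i _ => ?_
            calc ‖a i‖ ^ 2 ≤ (C * ‖(inner ℂ (e i) G : ℂ)‖) ^ 2 :=
                  pow_le_pow_left₀ (norm_nonneg _) (hanorm i) 2
              _ = C ^ 2 * ‖(inner ℂ (e i) G : ℂ)‖ ^ 2 := by ring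
        _ = C ^ 2 * ∑ i ∈ s, ‖(inner ℂ (e i) G : ℂ)‖ ^ 2 := by rw [Finset.mul_sum]
        _ ≤ C ^ 2 * ‖G‖ ^ 2 :=
            mul_le_mul_of_nonneg_left (horth.sum_inner_products_le G) (by positivity)
        _ = (C * ‖G‖) ^ 2 := by ring
    have h3 : ‖∑ i ∈ s, a i • e i‖ ^ 2 ≤ (C * ‖G‖) ^ 2 := by rw [hsq]; exact hle
    have h4 := Real.sqrt_le_sqrt h3
    rwa [Real.sqrt_sq (norm_nonneg _), Real.sqrt_sq (by positivity)] at h4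
  have hnorm : ‖H‖ ≤ C * ‖G‖ := by
    have ht : Filter.Tendsto (fun s : Finset (Σ l : ℕ, Fin (B.ν l)) =>
        ‖∑ i ∈ s, a i • e i‖) Filter.atTop (nhds ‖H‖) := hHasSum.norm
    exact le_of_tendsto ht (Filter.Eventually.of_forall hpartial)
  have hcoeffH : ∀ (l : ℕ) (j : Fin (B.ν l)), shCoeff d B (⇑H) l j = a ⟨l, j⟩ := by
    intro l j
    rw [shCoeff, ← inner_shE B ⟨l, j⟩ H]
    exact hinner ⟨l, j⟩
  have hGcoeff : ∀ (l : ℕ) (j : Fin (B.ν l)),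
      (inner ℂ (e ⟨l, j⟩) G : ℂ) = shCoeff d B g l j := fun l j => inner_shE_memLp B ⟨l, j⟩ hg
  refine ⟨⇑H, Lp.memLp H, ?_, ?_, ?_⟩
  · intro j
    rw [hcoeffH 0 j, ha]
    dsimp only
    rw [hmC0, zero_mul]
  · intro l hl j
    rw [hcoeffH l j, ha]
    dsimp only
    rw [hGcoeff l j]
  · have h1 : eLpNorm (⇑H) 2 (sphereMeasure d) = ENNReal.ofReal ‖H‖ := by
      rw [Lp.norm_def, ENNReal.ofReal_toReal (Lp.eLpNorm_ne_top H)]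
    have h2 : eLpNorm g 2 (sphereMeasure d) = ENNReal.ofReal ‖G‖ := by
      rw [Lp.norm_def, ENNReal.ofReal_toReal (Lp.eLpNorm_ne_top G)]
      exact (eLpNorm_congr_ae hg.coeFn_toLp).symm
    rw [h1, h2, ← ENNReal.ofReal_mul (le_trans hC0 (le_max_left C 1))]
    apply ENNReal.ofReal_le_ofReal
    calc ‖H‖ ≤ C * ‖G‖ := hnorm
      _ ≤ max C 1 * ‖G‖ := mul_le_mul_of_nonneg_right (le_max_left C 1) (norm_nonneg _)


end
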